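/- Let R be a ring, n a positive integer, and a,b,c ∈ R satisfy (aba)b = (aca)b, b(aba) = b(aca), (aba)c = (aca)c, and c(aba) = c(aca). Then (1-ba)^n has a generalized Drazin inverse if and only if (1-ac)^n has a generalized Drazin inverse. -/

import Mathlib

/-- An element is quasinilpotent if `1 + a*x` is a unit for every `x` commuting with `a`. -/
def Quasinilpotent {R : Type*} [Ring R] (a : R) : Prop :=
  ∀ x : R, x * a = a * x → IsUnit (1 + a * x)

/-- `x` is a generalized Drazin inverse of `a`. -/
def IsGDrazin {R : Type*} [Ring R] (a x : R) : Prop :=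
  x = x * a * x ∧ (∀ y : R, y * a = a * y → x * y = y * x) ∧
    Quasinilpotent (a - a ^ 2 * x)

/-
The proof goes through spectral idempotents (Koliha): `α` has a generalized Drazin inverse iff
some idempotent `p` in the double commutant of `α` makes `α * p` quasinilpotent and `α + p` a
unit. If `f` is the spectral idempotent of `1 - a * c` and `u` inverts `a * c` on the corner cut
out by `f`, then `b * u * a` is the spectral idempotent of `1 - b * a`, as in Jacobson's lemma
(the case `c = b`). The four hypotheses say that, for `d = b - c`, the element `a * d` is killed
on the left of `a * b` and `a * c`, and `d * a` on the right of `b * a` and `c * a`; this is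
exactly what lets `c` take the place of `b` in those computations. The opposite ring swaps the
roles of `b` and `c`, which gives the converse. Finally `1 - (1 - a * c) ^ n = M * c` and
`1 - (1 - b * a) ^ n = b * M` for `M = ∑ i < n, (1 - a * c) ^ i * a`, and `(M, b, c)` satisfies
the hypotheses again.
-/

open MulOpposite

section
variable {R : Type*} [Ring R]

theorem isUnit_one_sub_mul_comm {x y : R} (h : IsUnit (1 - x * y)) : IsUnit (1 - y * x) := by
  obtain ⟨w, hw⟩ := h
  refine ⟨⟨1 - y * x, 1 + y * ↑w⁻¹ * x, ?_, ?_⟩, rfl⟩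
  · calc (1 - y * x) * (1 + y * ↑w⁻¹ * x) = 1 - y * x + y * ((1 - x * y) * ↑w⁻¹) * x := by
          noncomm_ring
      _ = 1 := by rw [← hw, Units.mul_inv]; noncomm_ring
  · calc (1 + y * ↑w⁻¹ * x) * (1 - y * x) = 1 - y * x + y * (↑w⁻¹ * (1 - x * y)) * x := by
          noncomm_ring
      _ = 1 := by rw [← hw, Units.inv_mul]; noncomm_ring

theorem commute_one_sub_right_iff {z x : R} : Commute z (1 - x) ↔ Commute z x :=
  ⟨fun h => by simpa using (Commute.one_right z).sub_right h, (Commute.one_right z).sub_right⟩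

theorem eq_zero_of_mul_eq_mul_isUnit {r s x : R} (hs : IsUnit s) (hx : r * x = x * s)
    (h0 : r * (r * x) = 0) : x = 0 := by
  refine (hs.mul hs).mul_left_eq_zero.1 ?_
  rw [← h0, hx, ← mul_assoc, ← mul_assoc, hx]

theorem eq_zero_of_mul_eq_isUnit_mul {r s x : R} (hs : IsUnit s) (hrs : Commute r s)
    (hx : r * x = s * x) (h0 : r * (r * x) = 0) : x = 0 := by
  refine (hs.mul hs).mul_right_eq_zero.1 ?_
  rw [← h0, hx, ← mul_assoc, hrs.eq, mul_assoc, mul_assoc, hx]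

theorem commute_mul_mul_of_forall_commute {x y v : R}
    (hv : ∀ z, Commute z (x * y) → Commute v z) (z : R) (hz : Commute z (y * x)) :
    Commute (y * v * (x * y) * x) z := by
  have hxy : v * (x * y) = x * y * v := hv _ (Commute.refl _)
  have hxzy : v * (x * z * y) = x * z * y * v := hv _ <| by
    change x * z * y * (x * y) = x * y * (x * z * y)
    linear_combination (norm := noncomm_ring) x * hz.eq * y
  change _ = _
  linear_combination (norm := noncomm_ring)
    -(z * y * hxy * x) - hz.eq * (y * v * x) + y * hxzy * x - (y * v * x) * hz.eq

theorem Quasinilpotent.isUnit_one_add {m : R} (hm : Quasinilpotent m) : IsUnit (1 + m) := by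
  simpa using hm 1 (Commute.one_left m)

theorem Quasinilpotent.isUnit_one_sub {m : R} (hm : Quasinilpotent m) : IsUnit (1 - m) := by
  simpa [← sub_eq_add_neg] using hm (-1) (Commute.one_left m).neg_left

theorem Quasinilpotent.mul_comm {x y : R} (h : Quasinilpotent (x * y)) :
    Quasinilpotent (y * x) := by
  intro z hz
  have hc : Commute (-(x * z * z * y)) (x * y) := by
    change _ * _ = _ * _
    linear_combination (norm := noncomm_ring) -(x * z * hz * y) - x * hz * (z * y)
  have hsq : IsUnit (1 - y * x * z * (y * x * z)) := by
    have := isUnit_one_sub_mul_comm (x := x) (y := y * x * z * z * y) (by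
      convert h _ hc using 2; noncomm_ring)
    convert this using 2
    linear_combination (norm := noncomm_ring) -(y * x * z * hz)
  have hfac : (1 + y * x * z) * (1 - y * x * z) = 1 - y * x * z * (y * x * z) := by noncomm_ring
  have hcomm : Commute (1 + y * x * z) (1 - y * x * z) := by
    change _ = _; noncomm_ring
  simpa [mul_assoc] using (hcomm.isUnit_mul_iff.1 (hfac ▸ hsq)).1

theorem Quasinilpotent.op_iff {m : R} : Quasinilpotent (op m) ↔ Quasinilpotent m := by
  refine op_surjective.forall.trans (forall_congr' fun x => ?_)
  rw [← op_mul, ← op_mul, op_inj, ← op_one, ← op_add, isUnit_op]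
  constructor <;> intro h hx <;> rw [← hx] <;> exact h hx.symm

structure IsSpectralIdempotent (a p : R) : Prop where
  isIdempotentElem : IsIdempotentElem p
  commute : ∀ z, Commute z a → Commute p z
  quasinilpotent : Quasinilpotent (a * p)
  isUnit_add : IsUnit (a + p)

theorem IsGDrazin.isSpectralIdempotent {a x : R} (h : IsGDrazin a x) :
    IsSpectralIdempotent a (1 - a * x) := by
  obtain ⟨hxax, hcomm, hq⟩ := h
  have hxa : x * a = a * x := hcomm a rfl
  have hpp : (1 - a * x) * (1 - a * x) = 1 - a * x := by
    linear_combination (norm := noncomm_ring) -(a * hxax)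
  have hxp : x * (1 - a * x) = 0 := by linear_combination (norm := noncomm_ring) hxax
  have hpx : (1 - a * x) * x = 0 := by linear_combination (norm := noncomm_ring) hxax + hxa * x
  have hqp : Quasinilpotent (a * (1 - a * x)) := by
    convert hq using 1; noncomm_ring
  have hright : (a + (1 - a * x)) * (x + (1 - a * x)) = 1 + a * (1 - a * x) := by
    linear_combination (norm := noncomm_ring) hpx + hpp
  have hleft : (x + (1 - a * x)) * (a + (1 - a * x)) = 1 + a * (1 - a * x) := by
    linear_combination (norm := noncomm_ring) hxa + hxp + hpp - a * hxa
  refine ⟨hpp, fun z hz => (Commute.one_left z).sub_left (hz.symm.mul_left (hcomm z hz)), hqp, ?_⟩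
  · have hc : Commute (a + (1 - a * x)) (x + (1 - a * x)) := hright.trans hleft.symm
    exact (hc.isUnit_mul_iff.1 (hright ▸ hqp.isUnit_one_add)).1

theorem IsSpectralIdempotent.isGDrazin {a p : R} (h : IsSpectralIdempotent a p) :
    IsGDrazin a (↑h.isUnit_add.unit⁻¹ * (1 - p)) := by
  set v := h.isUnit_add.unit
  have hpp : p * p = p := h.isIdempotentElem
  have hv : ↑v⁻¹ * (a + p) = 1 := v.inv_mul
  have hinv : ∀ z, Commute z a → Commute z ↑v⁻¹ := fun z hz =>
    Commute.units_inv_right (hz.add_right (h.commute z hz).symm)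
  have hax : a * (↑v⁻¹ * (1 - p)) = 1 - p := by
    rw [← mul_assoc, (hinv a (Commute.refl a)).eq, mul_assoc]
    calc ↑v⁻¹ * (a * (1 - p)) = ↑v⁻¹ * (a + p) * (1 - p) := by
          linear_combination (norm := noncomm_ring) ↑v⁻¹ * hpp
      _ = 1 - p := by rw [hv, one_mul]
  refine ⟨?_, fun z hz => (hinv z hz).symm.mul_left ((Commute.one_left z).sub_left
    (h.commute z hz)), ?_⟩
  · rw [mul_assoc _ a, hax]
    linear_combination (norm := noncomm_ring) -(↑v⁻¹ * hpp)
  · convert h.quasinilpotent using 1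
    rw [pow_two, mul_assoc, hax]; noncomm_ring

theorem exists_isGDrazin_iff {a : R} :
    (∃ x, IsGDrazin a x) ↔ ∃ p, IsSpectralIdempotent a p :=
  ⟨fun ⟨_, hx⟩ => ⟨_, hx.isSpectralIdempotent⟩, fun ⟨_, hp⟩ => ⟨_, hp.isGDrazin⟩⟩

theorem isSpectralIdempotent_op_iff {a p : R} :
    IsSpectralIdempotent (op a) (op p) ↔ IsSpectralIdempotent a p := by
  have hcomm : (∀ z, Commute z (op a) → Commute (op p) z) ↔ ∀ z, Commute z a → Commute p z := by
    simp only [op_surjective.forall, commute_op]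
  have hqn (hpa : Commute p a) : Quasinilpotent (op a * op p) ↔ Quasinilpotent (a * p) := by
    rw [← op_mul, Quasinilpotent.op_iff, hpa.eq]
  constructor
  · intro h
    have hpa : Commute p a := hcomm.1 h.commute a (Commute.refl a)
    exact ⟨op_injective h.isIdempotentElem, hcomm.1 h.commute, (hqn hpa).1 h.quasinilpotent,
      by simpa [← op_add, isUnit_op] using h.isUnit_add⟩
  · intro h
    exact ⟨congrArg op h.isIdempotentElem, hcomm.2 h.commute,
      (hqn (h.commute a (Commute.refl a))).2 h.quasinilpotent,
      by rw [← op_add, isUnit_op]; exact h.isUnit_add⟩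

theorem exists_isSpectralIdempotent_op_iff {a : R} :
    (∃ p, IsSpectralIdempotent (op a) p) ↔ ∃ p, IsSpectralIdempotent a p := by
  simp only [op_surjective.exists, isSpectralIdempotent_op_iff]

structure IsCornerInverse (q f u : R) : Prop where
  q_mul_u : q * u = f
  u_mul_q : u * q = f
  f_mul_u : f * u = u
  commute : ∀ z, Commute z q → Commute u z

theorem IsCornerInverse.u_mul_f {q f u : R} (hu : IsCornerInverse q f u) : u * f = u := by
  rw [← hu.q_mul_u, ← mul_assoc, hu.u_mul_q, hu.f_mul_u]

theorem IsSpectralIdempotent.exists_isCornerInverse {q f : R}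
    (h : IsSpectralIdempotent (1 - q) f) : ∃ u, IsCornerInverse q f u := by
  have hff : f * f = f := h.isIdempotentElem
  have hcomm : ∀ z, Commute z q → Commute f z := fun z hz =>
    h.commute z (commute_one_sub_right_iff.2 hz)
  have hfq : f * q = q * f := hcomm q (Commute.refl q)
  obtain ⟨w, hw⟩ := h.quasinilpotent.isUnit_one_sub
  have hinv : ∀ z, Commute z q → Commute z ↑w⁻¹ := fun z hz => Commute.units_inv_right <| by
    rw [hw]
    exact (Commute.one_right z).sub_right
      (((Commute.one_right z).sub_right hz).mul_right (hcomm z hz).symm)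
  have hqf : q * f = f * ↑w := by
    rw [hw]; linear_combination (norm := noncomm_ring) hff - q * hff - hfq * f
  refine ⟨f * ↑w⁻¹, ?_, ?_, ?_, fun z hz => (hcomm z hz).mul_left (hinv z hz).symm⟩
  · rw [← mul_assoc, hqf, mul_assoc, Units.mul_inv, mul_one]
  · rw [mul_assoc, ← (hinv q (Commute.refl q)).eq, ← mul_assoc, hfq, hqf, mul_assoc,
      Units.mul_inv, mul_one]
  · rw [← mul_assoc, hff]

theorem mul_geom_sum_eq_nsmul {x z : R} (h : z * x = z) (n : ℕ) :
    z * ∑ i ∈ Finset.range n, x ^ i = n • z := by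
  have hpow (i : ℕ) : z * x ^ i = z := by
    induction i with
    | zero => rw [pow_zero, mul_one]
    | succ i ih => rw [pow_succ, ← mul_assoc, ih, h]
  simp [Finset.mul_sum, hpow]

theorem geom_sum_mul_eq_nsmul {x z : R} (h : x * z = z) (n : ℕ) :
    (∑ i ∈ Finset.range n, x ^ i) * z = n • z := by
  have hpow (i : ℕ) : x ^ i * z = z := by
    induction i with
    | zero => rw [pow_zero, one_mul]
    | succ i ih => rw [pow_succ', mul_assoc, ih, h]
  simp [Finset.sum_mul, hpow]

-- The hypotheses `(aba)b = (aca)b`, `(aba)c = (aca)c`, `b(aba) = b(aca)`, `c(aba) = c(aca)`.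
structure IsJacobsonTriple (a b c : R) : Prop where
  sub_mul_ab : (a * b - a * c) * (a * b) = 0
  sub_mul_ac : (a * b - a * c) * (a * c) = 0
  ba_mul_sub : b * a * (b * a - c * a) = 0
  ca_mul_sub : c * a * (b * a - c * a) = 0

namespace IsJacobsonTriple

variable {a b c f u : R}

theorem op (T : IsJacobsonTriple a b c) : IsJacobsonTriple (op a) (op c) (op b) := by
  refine ⟨?_, ?_, ?_, ?_⟩ <;> apply unop_injective <;>
    simp only [unop_mul, unop_sub, unop_op, unop_zero]
  · linear_combination (norm := noncomm_ring) -T.ca_mul_sub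
  · linear_combination (norm := noncomm_ring) -T.ba_mul_sub
  · linear_combination (norm := noncomm_ring) -T.sub_mul_ac
  · linear_combination (norm := noncomm_ring) -T.sub_mul_ab

theorem sub_mul_self (T : IsJacobsonTriple a b c) : (a * b - a * c) * (a * b - a * c) = 0 := by
  rw [mul_sub, T.sub_mul_ab, T.sub_mul_ac, sub_zero]

theorem sub_mul_u (T : IsJacobsonTriple a b c) (hu : IsCornerInverse (a * c) f u) :
    (a * b - a * c) * u = 0 := by
  rw [← hu.f_mul_u, ← hu.q_mul_u, ← mul_assoc, ← mul_assoc, T.sub_mul_ac, zero_mul, zero_mul]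

theorem ab_mul_u (T : IsJacobsonTriple a b c) (hu : IsCornerInverse (a * c) f u) :
    a * b * u = f := by
  rw [← hu.q_mul_u, ← sub_eq_zero, ← sub_mul, T.sub_mul_u hu]

theorem sub_mul_f (T : IsJacobsonTriple a b c) (hu : IsCornerInverse (a * c) f u) :
    (a * b - a * c) * f = 0 := by
  rw [← hu.q_mul_u, ← mul_assoc, T.sub_mul_ac, zero_mul]

theorem isIdempotentElem (T : IsJacobsonTriple a b c) (hu : IsCornerInverse (a * c) f u) :
    IsIdempotentElem (b * u * a) := by
  change _ = _
  rw [show b * u * a * (b * u * a) = b * u * (a * b * u) * a by noncomm_ring, T.ab_mul_u hu,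
    mul_assoc b u f, hu.u_mul_f]

theorem quasinilpotent (T : IsJacobsonTriple a b c) (hu : IsCornerInverse (a * c) f u)
    (hf : Quasinilpotent ((1 - a * c) * f)) : Quasinilpotent ((1 - b * a) * (b * u * a)) := by
  have hab : a * (b * (u - f)) = (1 - a * c) * f := by
    linear_combination (norm := noncomm_ring) T.ab_mul_u hu - T.sub_mul_f hu
  have ht : (1 - b * a) * (b * u * a) = b * (u - f) * a := by
    linear_combination (norm := noncomm_ring) -(b * T.ab_mul_u hu * a)
  rw [ht]
  exact (hab ▸ hf : Quasinilpotent (a * (b * (u - f)))).mul_comm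

theorem isUnit_add (T : IsJacobsonTriple a b c) (hu : IsCornerInverse (a * c) f u)
    (hf : IsUnit ((1 - a * c) + f)) : IsUnit ((1 - b * a) + b * u * a) := by
  have hz : IsUnit (1 - (1 - u) * (a * b - a * c)) := by
    refine isUnit_one_sub_mul_comm ?_
    rw [mul_sub, mul_one, T.sub_mul_u hu, sub_zero]
    exact IsNilpotent.isUnit_one_sub ⟨2, by rw [pow_two, T.sub_mul_self]⟩
  have hfac : 1 - (1 - u) * a * b = (1 - (1 - u) * (a * b - a * c)) * ((1 - a * c) + f) := by
    linear_combination (norm := noncomm_ring)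
      hu.u_mul_q - (1 - u) * T.sub_mul_ac + (1 - u) * T.sub_mul_f hu
  have := isUnit_one_sub_mul_comm (hfac ▸ hz.mul hf)
  convert this using 1; noncomm_ring

theorem mul_u_a_mul_ba (T : IsJacobsonTriple a b c) (hu : IsCornerInverse (a * c) f u) (y : R) :
    y * u * a * (b * a) = y * f * a := by
  have hu2 : u * u * (a * c) = u := by rw [mul_assoc, hu.u_mul_q, hu.u_mul_f]
  calc y * u * a * (b * a) = y * (u * u * (a * c)) * a * (b * a) := by rw [hu2]
    _ = y * u * u * a * (c * a * (c * a)) := by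
      linear_combination (norm := noncomm_ring) y * u * u * a * T.ca_mul_sub
    _ = y * (u * u * (a * c)) * (a * c) * a := by noncomm_ring
    _ = y * f * a := by rw [hu2, mul_assoc y u, hu.u_mul_q]

theorem bua_commute_ba (T : IsJacobsonTriple a b c) (hu : IsCornerInverse (a * c) f u) :
    Commute (b * u * a) (b * a) := by
  change _ = _
  rw [T.mul_u_a_mul_ba hu b, show b * a * (b * u * a) = b * (a * b * u) * a by noncomm_ring,
    T.ab_mul_u hu]

theorem cfa_mul_eq (T : IsJacobsonTriple a b c) (hu : IsCornerInverse (a * c) f u) {z : R}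
    (hz : Commute z (b * a)) : c * f * a * z = c * a * z * (b * u * a) := by
  have hξ : Commute (c * a * z * (b * a)) (c * a) := by
    change _ = _
    linear_combination (norm := noncomm_ring)
      -(c * a * z) * T.ba_mul_sub + c * a * hz.eq * (b * a) + T.ca_mul_sub * (z * (b * a))
  -- `c u³ (a c) a = c u² a` lies in the double commutant of `c a`.
  have hS := commute_mul_mul_of_forall_commute (x := a) (y := c) (v := u * u * u)
    (fun w hw => ((hu.commute w hw).mul_left (hu.commute w hw)).mul_left (hu.commute w hw)) _ hξ
  have hu_right : u * u * u * (a * c) * (a * c) = u := by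
    linear_combination (norm := noncomm_ring) u * u * hu.u_mul_q * (a * c) +
      u * hu.u_mul_f * (a * c) + u * hu.u_mul_q + hu.u_mul_f
  have hu_mid : a * c * (u * u * u) * (a * c) = u := by
    linear_combination (norm := noncomm_ring) hu.q_mul_u * (u * u * (a * c)) +
      hu.f_mul_u * (u * (a * c)) + u * hu.u_mul_q + hu.u_mul_f
  calc c * f * a * z = c * (u * u * u * (a * c) * (a * c)) * a * z * (b * a) := by
        rw [hu_right, ← T.mul_u_a_mul_ba hu c]
        linear_combination (norm := noncomm_ring) -(c * u * a * hz.eq)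
    _ = c * (u * u * u) * (a * c) * a * (c * a * z * (b * a)) := by noncomm_ring
    _ = c * a * z * (b * a) * (c * (u * u * u) * (a * c) * a) := hS.eq
    _ = c * a * z * (b * (a * c * (u * u * u) * (a * c)) * a) := by noncomm_ring
    _ = c * a * z * (b * u * a) := by rw [hu_mid]

theorem commute (T : IsJacobsonTriple a b c) (hu : IsCornerInverse (a * c) f u)
    (ht : IsUnit (1 - (1 - b * a) * (b * u * a))) {z : R} (hz : Commute z (b * a)) :
    Commute (b * u * a) z := by
  have hGG : b * u * a * (b * u * a) = b * u * a := T.isIdempotentElem hu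
  have hGba : b * u * a * (b * a) = b * a * (b * u * a) := T.bua_commute_ba hu
  have hcaG : c * a * (b * u * a) = c * f * a := by
    rw [show c * a * (b * u * a) = c * (a * b * u) * a by noncomm_ring, T.ab_mul_u hu]
  have hX := T.cfa_mul_eq hu hz
  generalize b * u * a = G at *
  -- `(1 - G) z G` and `G z (1 - G)` are killed by `c a`, hence by `(b a)²`, while `b a` acts on
  -- them as the unit `1 - (1 - b a) G`.
  have hN : (1 - G) * z * G = 0 := by
    refine eq_zero_of_mul_eq_mul_isUnit (r := b * a) ht ?_ ?_
    · linear_combination (norm := noncomm_ring) (1 - G) * z * hGG - (1 - G) * z * (b * a) * hGG -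
        (1 - G) * z * hGba * G - (1 - G) * hz.eq * G + hGba * (z * G)
    · have hca : c * a * ((1 - G) * z * G) = 0 := by
        linear_combination (norm := noncomm_ring) -(hX * G) - c * a * z * hGG - hcaG * (z * G)
      linear_combination (norm := noncomm_ring) T.ba_mul_sub * ((1 - G) * z * G) + b * a * hca
  have hE : G * z * (1 - G) = 0 := by
    refine eq_zero_of_mul_eq_isUnit_mul (r := b * a) ht ?_ ?_ ?_
    · change _ = _; linear_combination (norm := noncomm_ring) hGba - b * a * hGba
    · linear_combination (norm := noncomm_ring) hGG * (z * (1 - G)) - b * a * hGG * (z * (1 - G))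
    · have hca : c * a * (G * z * (1 - G)) = 0 := by
        linear_combination (norm := noncomm_ring)
          -(c * a * z * hGG) + hX * (1 - G) + hcaG * (z * (1 - G))
      linear_combination (norm := noncomm_ring) T.ba_mul_sub * (G * z * (1 - G)) + b * a * hca
  change _ = _
  linear_combination (norm := noncomm_ring) hE - hN

theorem isSpectralIdempotent (T : IsJacobsonTriple a b c)
    (hf : IsSpectralIdempotent (1 - a * c) f) (hu : IsCornerInverse (a * c) f u) :
    IsSpectralIdempotent (1 - b * a) (b * u * a) := by
  have hq := T.quasinilpotent hu hf.quasinilpotent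
  exact ⟨T.isIdempotentElem hu,
    fun z hz => T.commute hu hq.isUnit_one_sub (commute_one_sub_right_iff.1 hz), hq,
    T.isUnit_add hu hf.isUnit_add⟩

theorem exists_isSpectralIdempotent_ba_of_ac (T : IsJacobsonTriple a b c)
    (h : ∃ p, IsSpectralIdempotent (1 - a * c) p) : ∃ p, IsSpectralIdempotent (1 - b * a) p := by
  obtain ⟨f, hf⟩ := h
  obtain ⟨u, hu⟩ := hf.exists_isCornerInverse
  exact ⟨_, T.isSpectralIdempotent hf hu⟩

theorem exists_isSpectralIdempotent_iff (T : IsJacobsonTriple a b c) :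
    (∃ p, IsSpectralIdempotent (1 - b * a) p) ↔ ∃ p, IsSpectralIdempotent (1 - a * c) p := by
  refine ⟨fun h => ?_, T.exists_isSpectralIdempotent_ba_of_ac⟩
  rw [← exists_isSpectralIdempotent_op_iff] at h ⊢
  simpa using T.op.exists_isSpectralIdempotent_ba_of_ac (by simpa using h)

theorem geom_sum_mul (T : IsJacobsonTriple a b c) (n : ℕ) :
    IsJacobsonTriple ((∑ i ∈ Finset.range n, (1 - a * c) ^ i) * a) b c := by
  set Q := ∑ i ∈ Finset.range n, (1 - a * c) ^ i
  have hQ₁ : (a * b - a * c) * Q = n • (a * b - a * c) :=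
    mul_geom_sum_eq_nsmul (by rw [mul_sub, T.sub_mul_ac, mul_one, sub_zero]) n
  have hQ₂ : Q * (a * (b * a - c * a)) = n • (a * (b * a - c * a)) :=
    geom_sum_mul_eq_nsmul (by
      rw [sub_mul, one_mul, mul_assoc, ← mul_assoc c, T.ca_mul_sub, mul_zero, sub_zero]) n
  refine ⟨?_, ?_, ?_, ?_⟩
  · calc (Q * a * b - Q * a * c) * (Q * a * b) = Q * ((a * b - a * c) * Q) * (a * b) := by
          noncomm_ring
      _ = 0 := by
          rw [hQ₁, mul_smul_comm, smul_mul_assoc, mul_assoc, T.sub_mul_ab, mul_zero, smul_zero]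
  · calc (Q * a * b - Q * a * c) * (Q * a * c) = Q * ((a * b - a * c) * Q) * (a * c) := by
          noncomm_ring
      _ = 0 := by
          rw [hQ₁, mul_smul_comm, smul_mul_assoc, mul_assoc, T.sub_mul_ac, mul_zero, smul_zero]
  · calc b * (Q * a) * (b * (Q * a) - c * (Q * a)) = b * (Q * ((a * b - a * c) * Q)) * a := by
          noncomm_ring
      _ = n • (b * (Q * (a * (b * a - c * a)))) := by
          rw [hQ₁, mul_smul_comm, mul_smul_comm, smul_mul_assoc]; congr 1; noncomm_ring
      _ = 0 := by
          rw [hQ₂, mul_smul_comm, ← mul_assoc, T.ba_mul_sub, smul_zero, smul_zero]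
  · calc c * (Q * a) * (b * (Q * a) - c * (Q * a)) = c * (Q * ((a * b - a * c) * Q)) * a := by
          noncomm_ring
      _ = n • (c * (Q * (a * (b * a - c * a)))) := by
          rw [hQ₁, mul_smul_comm, mul_smul_comm, smul_mul_assoc]; congr 1; noncomm_ring
      _ = 0 := by
          rw [hQ₂, mul_smul_comm, ← mul_assoc, T.ca_mul_sub, smul_zero, smul_zero]

theorem b_mul_pow_mul (T : IsJacobsonTriple a b c) (i : ℕ) :
    b * (1 - a * c) ^ i * a = (1 - b * a) ^ i * (b * a) := by
  induction i with
  | zero => simp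
  | succ i ih =>
    calc b * (1 - a * c) ^ (i + 1) * a = b * (1 - a * c) ^ i * a * (1 - c * a) := by
          rw [pow_succ]; noncomm_ring
      _ = (1 - b * a) ^ i * (b * a - b * a * (c * a)) := by rw [ih]; noncomm_ring
      _ = (1 - b * a) ^ (i + 1) * (b * a) := by
          rw [pow_succ]; linear_combination (norm := noncomm_ring) (1 - b * a) ^ i * T.ba_mul_sub

theorem one_sub_mul_pow (T : IsJacobsonTriple a b c) (n : ℕ) :
    (1 - b * a) ^ n = 1 - b * ((∑ i ∈ Finset.range n, (1 - a * c) ^ i) * a) := by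
  rw [Finset.sum_mul, Finset.mul_sum]
  simp_rw [← mul_assoc, T.b_mul_pow_mul]
  have := geom_sum_mul_neg (1 - b * a) n
  rw [sub_sub_cancel] at this
  rw [← Finset.sum_mul, this, sub_sub_cancel]

end IsJacobsonTriple

theorem one_sub_mul_pow_eq (a c : R) (n : ℕ) :
    (1 - a * c) ^ n = 1 - (∑ i ∈ Finset.range n, (1 - a * c) ^ i) * a * c := by
  have := geom_sum_mul_neg (1 - a * c) n
  rw [sub_sub_cancel] at this
  rw [mul_assoc, this, sub_sub_cancel]

end

theorem gdrazin_pow_three_elements_general {R : Type*} [Ring R] (n : ℕ) (a b c : R)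
    (h1 : (a * b * a) * b = (a * c * a) * b) (h2 : b * (a * b * a) = b * (a * c * a))
    (h3 : (a * b * a) * c = (a * c * a) * c) (h4 : c * (a * b * a) = c * (a * c * a)) :
    (∃ x : R, IsGDrazin ((1 - b * a) ^ n) x) ↔ (∃ y : R, IsGDrazin ((1 - a * c) ^ n) y) := by
  have T : IsJacobsonTriple a b c := by
    constructor
    · linear_combination (norm := noncomm_ring) h1
    · linear_combination (norm := noncomm_ring) h3
    · linear_combination (norm := noncomm_ring) h2
    · linear_combination (norm := noncomm_ring) h4
  rw [T.one_sub_mul_pow, one_sub_mul_pow_eq, exists_isGDrazin_iff, exists_isGDrazin_iff]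
  exact (T.geom_sum_mul n).exists_isSpectralIdempotent_iff

theorem gdrazin_pow_three_elements {R : Type*} [Ring R] (n : ℕ) (hn : 1 ≤ n) (a b c : R)
    (h1 : (a * b * a) * b = (a * c * a) * b) (h2 : b * (a * b * a) = b * (a * c * a))
    (h3 : (a * b * a) * c = (a * c * a) * c) (h4 : c * (a * b * a) = c * (a * c * a)) :
    (∃ x : R, IsGDrazin ((1 - b * a) ^ n) x) ↔ (∃ y : R, IsGDrazin ((1 - a * c) ^ n) y) :=
  gdrazin_pow_three_elements_general n a b c h1 h2 h3 h4
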